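/- arXiv:2302.10083 — 2 statements merged into one kernel-verified Lean document; each statement's English description precedes it below -/
import Mathlib

section
/- Let S_0 : Σ^n → {0,1} be the indicator of the support of f embedded in {0,1}^n ⊆ Σ^n (zero on strings containing a wildcard), and let M = M_n ∘ ⋯ ∘ M_1 (S_0) be the result of applying the Merge transform across each dimension once in any order. Then M(u) = 1 if and only if u is an implicant of f that covers at least one point, i.e., f(x) = 1 for all x ∈ {0,1}^n covered by u. -/
abbrev MTerm (n : ℕ) := Fin n → Option Bool

abbrev QState (n : ℕ) := MTerm n → Bool

def covers {n : ℕ} (u : MTerm n) (x : Fin n → Bool) : Prop :=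
  ∀ i : Fin n, ∀ b : Bool, u i = some b → x i = b

/-- The `Merge` transform across dimension `i`. -/
def MergeDim {n : ℕ} (i : Fin n) (S : QState n) : QState n :=
  fun u =>
    if u i = none then
      S u || (S (Function.update u i (some false)) && S (Function.update u i (some true)))
    else S u

/-!
Induction on the processed dimensions: after merging across the dimensions in `s`, the
state marks exactly the implicants of `f` whose wildcards all lie in `s`. Merging across a
new dimension `j` keeps this true because a term with a wildcard at `j` is an implicant iff
both of its specialisations at `j` are. Covering a point is automatic: fill the wildcards
arbitrarily.
-/

variable {n : ℕ}

def IsImplicant (f : (Fin n → Bool) → Bool) (u : MTerm n) : Prop :=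
  ∀ x, covers u x → f x = true

def MarksImplicants (f : (Fin n → Bool) → Bool) (s : Set (Fin n)) (S : QState n) : Prop :=
  ∀ u, S u = true ↔ (∀ i, u i = none → i ∈ s) ∧ IsImplicant f u

theorem exists_covers (u : MTerm n) : ∃ x, covers u x :=
  ⟨fun i => (u i).getD false, fun i b hb => by simp [hb]⟩

theorem covers_update_some_iff {u : MTerm n} {j : Fin n} (hu : u j = none) (b : Bool)
    (x : Fin n → Bool) :
    covers (Function.update u j (some b)) x ↔ x j = b ∧ covers u x := by
  constructor
  · intro hx
    refine ⟨hx j b (Function.update_self ..), fun i c hc => hx i c ?_⟩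
    rwa [Function.update_of_ne (by rintro rfl; simp [hu] at hc)]
  · rintro ⟨rfl, hx⟩ i c hc
    by_cases hij : i = j
    · subst hij
      simpa using hc
    · exact hx i c (by rwa [Function.update_of_ne hij] at hc)

theorem isImplicant_iff_forall_update {f : (Fin n → Bool) → Bool} {u : MTerm n} {j : Fin n}
    (hu : u j = none) :
    IsImplicant f u ↔ ∀ b, IsImplicant f (Function.update u j (some b)) := by
  simp only [IsImplicant, covers_update_some_iff hu]
  exact ⟨fun h b x hx => h x hx.2, fun h x hx => h (x j) x ⟨rfl, hx⟩⟩

theorem wildcards_update_some_subset_iff (u : MTerm n) (j : Fin n) (b : Bool)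
    (s : Set (Fin n)) :
    (∀ i, Function.update u j (some b) i = none → i ∈ s) ↔
      ∀ i, u i = none → i ∈ insert j s := by
  refine forall_congr' fun i => ?_
  by_cases hij : i = j
  · subst hij
    simp
  · simp [hij]

theorem MarksImplicants.mergeDim {f : (Fin n → Bool) → Bool} {s : Set (Fin n)} {S : QState n}
    {j : Fin n} (hS : MarksImplicants f s S) (hj : j ∉ s) :
    MarksImplicants f (insert j s) (MergeDim j S) := by
  intro u
  unfold MergeDim
  by_cases hu : u j = none
  · have hSu : S u = false := by
      by_contra h
      exact hj (((hS u).mp (Bool.not_eq_false _ ▸ h)).1 j hu)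
    rw [if_pos hu, hSu, Bool.false_or, Bool.and_eq_true, hS, hS,
      wildcards_update_some_subset_iff, wildcards_update_some_subset_iff,
      isImplicant_iff_forall_update hu, Bool.forall_bool]
    tauto
  · rw [if_neg hu, hS]
    refine and_congr_left' (forall_congr' fun i => ⟨fun h hi => Or.inr (h hi), fun h hi => ?_⟩)
    exact (h hi).resolve_left (by rintro rfl; exact hu hi)

theorem MarksImplicants.foldl_mergeDim {f : (Fin n → Bool) → Bool} :
    ∀ {l : List (Fin n)} {s : Set (Fin n)} {S : QState n}, MarksImplicants f s S →
      l.Nodup → (∀ j ∈ l, j ∉ s) →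
      MarksImplicants f (s ∪ {i | i ∈ l}) (l.foldl (fun S i => MergeDim i S) S)
  | [], s, S, hS, _, _ => by simpa using hS
  | j :: l, s, S, hS, hnd, hdisj => by
    obtain ⟨hjl, hnd⟩ := List.nodup_cons.mp hnd
    have hstep := hS.mergeDim (hdisj j List.mem_cons_self)
    have hrest : ∀ k ∈ l, k ∉ insert j s := fun k hk hks =>
      (Set.mem_insert_iff.mp hks).elim (by rintro rfl; exact hjl hk)
        (hdisj k (List.mem_cons_of_mem j hk))
    have hset : insert j s ∪ {i | i ∈ l} = s ∪ {i | i ∈ j :: l} := by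
      ext i
      simp only [List.mem_cons, Set.mem_union, Set.mem_ofPred_eq, Set.mem_insert_iff]
      tauto
    rw [List.foldl_cons, ← hset]
    exact hstep.foldl_mergeDim hnd hrest

theorem marksImplicants_empty {f : (Fin n → Bool) → Bool} {S₀ : QState n}
    (hS₀ : ∀ u : MTerm n,
      S₀ u = true ↔ ∃ x : Fin n → Bool, (∀ i, u i = some (x i)) ∧ f x = true) :
    MarksImplicants f ∅ S₀ := by
  intro u
  rw [hS₀]
  constructor
  · rintro ⟨x, hx, hfx⟩
    refine ⟨fun i hi => by simp [hx i] at hi, fun y hy => ?_⟩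
    rwa [funext fun i => hy i (x i) (hx i)]
  · rintro ⟨hw, hi⟩
    obtain ⟨x, hx⟩ := exists_covers u
    have hux : ∀ i, u i = some (x i) := fun i => by
      cases h : u i with
      | none => exact absurd (hw i h) (Set.notMem_empty i)
      | some b => rw [hx i b h]
    exact ⟨x, hux, hi x hx⟩

open Classical in
/-- Starting from the indicator `S₀` of the support of `f` embedded into `Σ^n`
(zero on strings containing a wildcard) and applying the Merge transform once across
each dimension, in any order, yields the indicator of the set of implicants of `f`
covering at least one point. -/
theorem stmt_12 {n : ℕ} (f : (Fin n → Bool) → Bool)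
    (S₀ : QState n)
    (hS₀ : ∀ u : MTerm n,
      S₀ u = true ↔ ∃ x : Fin n → Bool, (∀ i, u i = some (x i)) ∧ f x = true)
    (l : List (Fin n)) (hnd : l.Nodup) (hall : ∀ i : Fin n, i ∈ l) :
    ∀ u : MTerm n,
      (l.foldl (fun S i => MergeDim i S) S₀) u = true ↔
        ((∃ x, covers u x) ∧ ∀ x, covers u x → f x = true) := by
  have hM := (marksImplicants_empty hS₀).foldl_mergeDim hnd (fun _ _ => Set.notMem_empty _)
  intro u
  rw [hM u]
  simp only [Set.empty_union, Set.mem_ofPred_eq, hall, implies_true, true_and, exists_covers u,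
    IsImplicant]
end

section
/- Let M : Σ^n → {0,1} be the indicator of the set of implicants of f (strings u with f = 1 on all points covered by u, restricted to u covering at least one point, i.e., all u ∈ Σ^n). Applying the Reduce transform across each dimension once, in any order, to M yields the indicator of the set of prime implicants of f. -/
def Implicant {n : ℕ} (f : (Fin n → Bool) → Bool) (u : MTerm n) : Prop :=
  ∀ x, covers u x → f x = true

def PrimeImplicant {n : ℕ} (f : (Fin n → Bool) → Bool) (u : MTerm n) : Prop :=
  Implicant f u ∧ ∀ i : Fin n, u i ≠ none → ¬ Implicant f (Function.update u i none)

/-- The `Reduce` transform across dimension `i`. -/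
def ReduceDim {n : ℕ} (i : Fin n) (S : QState n) : QState n :=
  fun v =>
    if v i = none then S v
    else S v && !(S (Function.update v i none))

variable {n : ℕ} {f : (Fin n → Bool) → Bool}

theorem Implicant.mono {v w : MTerm n} (hv : Implicant f v)
    (hvw : ∀ k b, v k = some b → w k = some b) : Implicant f w :=
  fun x hx => hv x fun k b hk => hx k b (hvw k b hk)

theorem Implicant.of_update_none_update_none {u : MTerm n} {i j : Fin n}
    (h : Implicant f (Function.update (Function.update u j none) i none)) :
    Implicant f (Function.update u i none) := by
  refine h.mono fun k b hk => ?_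
  by_cases hki : k = i
  · subst hki; simp at hk
  · by_cases hkj : k = j
    · subst hkj; simp [hki] at hk
    · simpa [hki, hkj] using hk

def PrimeAlong (f : (Fin n → Bool) → Bool) (s : Set (Fin n)) (u : MTerm n) : Prop :=
  Implicant f u ∧ ∀ i ∈ s, u i ≠ none → ¬ Implicant f (Function.update u i none)

namespace PrimeAlong

theorem empty_iff {u : MTerm n} : PrimeAlong f ∅ u ↔ Implicant f u := by
  simp [PrimeAlong]

theorem univ_iff {u : MTerm n} : PrimeAlong f Set.univ u ↔ PrimeImplicant f u := by
  simp [PrimeAlong, PrimeImplicant]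

theorem anti {s t : Set (Fin n)} {u : MTerm n} (h : PrimeAlong f t u) (hst : s ⊆ t) :
    PrimeAlong f s u :=
  ⟨h.1, fun i hi => h.2 i (hst hi)⟩

theorem insert_iff_of_eq_none {s : Set (Fin n)} {u : MTerm n} {j : Fin n} (hj : u j = none) :
    PrimeAlong f (insert j s) u ↔ PrimeAlong f s u := by
  refine ⟨fun h => h.anti (Set.subset_insert j s), fun h => ⟨h.1, ?_⟩⟩
  rintro i (rfl | hi) hne
  · exact absurd hj hne
  · exact h.2 i hi hne

theorem update_none {s : Set (Fin n)} {u : MTerm n} (h : PrimeAlong f s u) {j : Fin n}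
    (hj : Implicant f (Function.update u j none)) :
    PrimeAlong f s (Function.update u j none) := by
  refine ⟨hj, fun i hi hne himp => ?_⟩
  have hij : i ≠ j := by rintro rfl; simp at hne
  rw [Function.update_of_ne hij] at hne
  exact h.2 i hi hne himp.of_update_none_update_none

end PrimeAlong

theorem reduceDim_eq_true_iff {s : Set (Fin n)} {S : QState n}
    (hS : ∀ u, S u = true ↔ PrimeAlong f s u) (j : Fin n) (u : MTerm n) :
    ReduceDim j S u = true ↔ PrimeAlong f (insert j s) u := by
  by_cases hj : u j = none
  · simp [ReduceDim, hj, hS, PrimeAlong.insert_iff_of_eq_none hj]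
  simp only [ReduceDim, hj, if_false, Bool.and_eq_true, Bool.not_eq_true', hS]
  constructor
  · rintro ⟨hu, hred⟩
    have hfree : ¬ Implicant f (Function.update u j none) := fun himp => by
      simpa [hred] using (hS _).2 (hu.update_none himp)
    refine ⟨hu.1, ?_⟩
    rintro i (rfl | hi) hne
    · exact hfree
    · exact hu.2 i hi hne
  · intro h
    refine ⟨h.anti (Set.subset_insert j s), ?_⟩
    by_contra hne
    exact h.2 j (Set.mem_insert j s) hj ((hS _).1 (by simpa using hne)).1

theorem foldl_reduceDim_eq_true_iff (l : List (Fin n)) {s : Set (Fin n)} {S : QState n}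
    (hS : ∀ u, S u = true ↔ PrimeAlong f s u) (u : MTerm n) :
    (l.foldl (fun S i => ReduceDim i S) S) u = true ↔ PrimeAlong f (s ∪ {i | i ∈ l}) u := by
  induction l generalizing s S with
  | nil => simp [hS]
  | cons j t ih =>
    have hset : insert j s ∪ {i | i ∈ t} = s ∪ {i | i ∈ j :: t} := by
      ext i; simp only [Set.mem_union, Set.mem_insert_iff, Set.mem_ofPred_eq, List.mem_cons]; tauto
    rw [List.foldl_cons, ih (reduceDim_eq_true_iff hS j), hset]

open Classical in
theorem stmt_13_general {n : ℕ} (f : (Fin n → Bool) → Bool)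
    (M : QState n) (hM : ∀ u : MTerm n, M u = true ↔ Implicant f u)
    (l : List (Fin n)) (hall : ∀ i : Fin n, i ∈ l) :
    ∀ u : MTerm n,
      (l.foldl (fun S i => ReduceDim i S) M) u = true ↔ PrimeImplicant f u := by
  intro u
  have hl : (∅ : Set (Fin n)) ∪ {i | i ∈ l} = Set.univ := by
    ext i; simp [hall i]
  rw [foldl_reduceDim_eq_true_iff l (fun v => (hM v).trans PrimeAlong.empty_iff.symm), hl,
    PrimeAlong.univ_iff]

open Classical in
/-- Starting from the indicator `M` of the set of implicants of `f` and applying the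
Reduce transform once across each dimension, in any order, yields the indicator of the
set of prime implicants of `f`. -/
theorem stmt_13 {n : ℕ} (f : (Fin n → Bool) → Bool)
    (M : QState n) (hM : ∀ u : MTerm n, M u = true ↔ Implicant f u)
    (l : List (Fin n)) (hnd : l.Nodup) (hall : ∀ i : Fin n, i ∈ l) :
    ∀ u : MTerm n,
      (l.foldl (fun S i => ReduceDim i S) M) u = true ↔ PrimeImplicant f u :=
  stmt_13_general f M hM l hall
end
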